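/- Let p be a prime, let S be a discrete p-toral group, and let P be a nontrivial normal subgroup of S. Then P ∩ Ω₁(Z(S)) ≠ 1; explicitly, there exists an element x ∈ P with x ≠ 1, x^p = 1, and x lying in the center of S. -/

import Mathlib

/-- The image of the `p`-adic integers in `ℚ_[p]`, as an additive subgroup. -/
noncomputable def padicIntAddSubgroup (p : ℕ) [Fact p.Prime] : AddSubgroup ℚ_[p] :=
  (PadicInt.Coe.ringHom (p := p)).toAddMonoidHom.range

/-- The Prüfer `p`-group `ℤ(p^∞)`, realized as `ℚ_[p] ⧸ ℤ_[p]`. -/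
abbrev ZpInfty (p : ℕ) [Fact p.Prime] : Type :=
  ℚ_[p] ⧸ padicIntAddSubgroup p

/-- The discrete `p`-torus of rank `r`. -/
abbrev DiscretePTorus (p : ℕ) [Fact p.Prime] (r : ℕ) : Type :=
  Fin r → ZpInfty p

/-- A group `S` is discrete `p`-toral if it has a normal subgroup of finite `p`-power
index that is isomorphic to a discrete `p`-torus. -/
def IsDiscretePToral (p : ℕ) [Fact p.Prime] (S : Type*) [Group S] : Prop :=
  ∃ T : Subgroup S, T.Normal ∧ (∃ n : ℕ, T.index = p ^ n) ∧
    ∃ r : ℕ, Nonempty (T ≃* Multiplicative (DiscretePTorus p r))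

/-! A discrete `p`-toral group `S` with torus `T` is a `p`-group, since `T` is `p`-torsion and
`S ⧸ T` is a finite `p`-group. In a `p`-group every finite nontrivial normal subgroup `K` meets
the center: the conjugation action of `S` on `K` fixes `1`, and `p ∣ |K|` forces a second fixed
point. Such a `K ≤ P` exists: if `P ∩ T = 1` then `P` embeds into `S ⧸ T` and is itself finite;
otherwise `K = P ∩ Ω₁(T)` (here `T.torsionBy p`) is nontrivial, and finite because `Ω₁` of a
rank `r` torus has `p ^ r` elements. A nontrivial element of the `p`-group `P ∩ Z(S)` has a power of order `p`. -/

namespace ZpInfty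

variable {p : ℕ} [Fact p.Prime]

theorem mem_padicIntAddSubgroup_iff {x : ℚ_[p]} : x ∈ padicIntAddSubgroup p ↔ ‖x‖ ≤ 1 :=
  ⟨fun ⟨y, hy⟩ => hy ▸ y.2, fun h => ⟨⟨x, h⟩, rfl⟩⟩

theorem exists_pow_nsmul_eq_zero (a : ZpInfty p) : ∃ k : ℕ, p ^ k • a = 0 := by
  obtain ⟨q, rfl⟩ := QuotientAddGroup.mk_surjective a
  have hp : (1 : ℝ) < p := mod_cast (Fact.out : p.Prime).one_lt
  obtain ⟨k, hk⟩ := pow_unbounded_of_one_lt ‖q‖ hp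
  refine ⟨k, ?_⟩
  rw [← QuotientAddGroup.mk_nsmul, QuotientAddGroup.eq_zero_iff, mem_padicIntAddSubgroup_iff,
    nsmul_eq_mul, norm_mul, Nat.cast_pow, norm_pow, Padic.norm_p, inv_pow,
    inv_mul_le_iff₀ (by positivity), mul_one]
  exact hk.le

theorem finite_setOf_nsmul_eq_zero : {a : ZpInfty p | p • a = 0}.Finite := by
  have hp : (p : ℚ_[p]) ≠ 0 := mod_cast (Fact.out : p.Prime).ne_zero
  refine (Set.finite_range fun j : Fin p => ((j / p : ℚ_[p]) : ZpInfty p)).subset ?_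
  rintro a (ha : p • a = 0)
  obtain ⟨q, rfl⟩ := QuotientAddGroup.mk_surjective a
  rw [← QuotientAddGroup.mk_nsmul, QuotientAddGroup.eq_zero_iff, nsmul_eq_mul] at ha
  obtain ⟨c, hc⟩ := ha
  obtain ⟨j, hjp, hj⟩ := PadicInt.exists_mem_range c
  rw [PadicInt.maximalIdeal_eq_span_p, Ideal.mem_span_singleton] at hj
  obtain ⟨d, hd⟩ := hj
  refine ⟨⟨j, hjp⟩, QuotientAddGroup.eq.2 ⟨d, ?_⟩⟩
  have hd' : (c : ℚ_[p]) - j = p * d := mod_cast congrArg ((↑) : ℤ_[p] → ℚ_[p]) hd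
  change (c : ℚ_[p]) = p * q at hc
  change (d : ℚ_[p]) = -(j / p) + q
  field_simp
  linear_combination hc - hd'

end ZpInfty

namespace DiscretePTorus

variable {p : ℕ} [Fact p.Prime] {r : ℕ}

theorem isPGroup : IsPGroup p (Multiplicative (DiscretePTorus p r)) := by
  intro a
  choose k hk using fun i => ZpInfty.exists_pow_nsmul_eq_zero (a.toAdd i)
  refine ⟨Finset.univ.sup k, Multiplicative.toAdd.injective (funext fun i => ?_)⟩
  obtain ⟨m, hm⟩ := Nat.exists_eq_add_of_le (Finset.le_sup (Finset.mem_univ i) (f := k))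
  change p ^ Finset.univ.sup k • a.toAdd i = 0
  rw [hm, pow_add, mul_nsmul, hk, nsmul_zero]

theorem finite_setOf_pow_eq_one :
    {a : Multiplicative (DiscretePTorus p r) | a ^ p = 1}.Finite := by
  refine ((Set.Finite.pi' fun _ => ZpInfty.finite_setOf_nsmul_eq_zero).preimage
    Multiplicative.toAdd.injective.injOn).subset fun a ha i => ?_
  exact congrFun (congrArg Multiplicative.toAdd ha) i

end DiscretePTorus

namespace Subgroup

variable {G : Type*} [Group G]

theorem finite_of_disjoint {H K : Subgroup G} [K.FiniteIndex] (h : Disjoint H K) : Finite H := by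
  refine Finite.of_injective (fun x : H => (x : G ⧸ K)) fun a b hab => Subtype.ext ?_
  have hmem : (a : G)⁻¹ * b ∈ H ⊓ K := ⟨H.mul_mem (H.inv_mem a.2) b.2, QuotientGroup.eq.1 hab⟩
  rwa [h.eq_bot, mem_bot, inv_mul_eq_one] at hmem

def torsionBy (H : Subgroup G) [IsMulCommutative H] (n : ℕ) : Subgroup G where
  carrier := {x | x ∈ H ∧ x ^ n = 1}
  one_mem' := ⟨H.one_mem, one_pow n⟩
  mul_mem' := by
    rintro a b ⟨ha, han⟩ ⟨hb, hbn⟩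
    have hab : Commute a b :=
      congrArg Subtype.val (IsMulCommutative.is_comm.comm (⟨a, ha⟩ : H) ⟨b, hb⟩)
    exact ⟨H.mul_mem ha hb, by rw [hab.mul_pow, han, hbn, one_mul]⟩
  inv_mem' := by
    rintro a ⟨ha, han⟩
    exact ⟨H.inv_mem ha, by rw [inv_pow, han, inv_one]⟩

variable {H : Subgroup G} [IsMulCommutative H] {n : ℕ}

instance torsionBy_normal [hH : H.Normal] : (H.torsionBy n).Normal :=
  ⟨fun x ⟨hx, hxn⟩ g => ⟨hH.conj_mem x hx g, by rw [conj_pow, hxn, mul_one, mul_inv_cancel]⟩⟩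

theorem finite_torsionBy {A : Type*} [CommGroup A] (e : H ≃* A)
    (hA : {a : A | a ^ n = 1}.Finite) : Finite (H.torsionBy n) := by
  refine Set.Finite.to_subtype (((hA.preimage e.injective.injOn).image Subtype.val).subset ?_)
  rintro x ⟨hx, hxn⟩
  exact ⟨⟨x, hx⟩, by simp [← map_pow, show (⟨x, hx⟩ : H) ^ n = 1 from Subtype.ext hxn], rfl⟩

end Subgroup

namespace IsPGroup

variable {p : ℕ} {G : Type*} [Group G]

theorem of_quotient {N : Subgroup G} [N.Normal] (hN : IsPGroup p N) (hQ : IsPGroup p (G ⧸ N)) :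
    IsPGroup p G := by
  intro g
  obtain ⟨k, hk⟩ := hQ g
  have hgN : g ^ p ^ k ∈ N := (QuotientGroup.eq_one_iff _).1 (by rw [QuotientGroup.mk_pow, hk])
  obtain ⟨m, hm⟩ := hN ⟨g ^ p ^ k, hgN⟩
  exact ⟨k + m, by rw [pow_add, pow_mul]; exact congrArg Subtype.val hm⟩

variable [Fact p.Prime]

theorem exists_orderOf_eq_prime_of_ne_bot (hG : IsPGroup p G) {H : Subgroup G} (hH : H ≠ ⊥) :
    ∃ x ∈ H, orderOf x = p := by
  obtain ⟨g, hgH, hg1⟩ := (Subgroup.bot_or_exists_ne_one H).resolve_left hH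
  obtain ⟨k, hk⟩ := iff_orderOf.1 hG g
  obtain ⟨j, rfl⟩ : ∃ j, k = j + 1 := by
    refine Nat.exists_eq_add_one.2 (Nat.pos_of_ne_zero fun hk0 => hg1 ?_)
    rwa [hk0, pow_zero, orderOf_eq_one_iff] at hk
  refine ⟨g ^ p ^ j, H.pow_mem hgH _, orderOf_eq_prime ?_ ?_⟩
  · rw [← pow_mul, ← pow_succ, ← hk, pow_orderOf_eq_one]
  · exact pow_ne_one_of_lt_orderOf (pow_ne_zero _ (Fact.out : p.Prime).ne_zero)
      (hk ▸ pow_lt_pow_right₀ (Fact.out : p.Prime).one_lt j.lt_succ_self)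

theorem inf_center_ne_bot (hG : IsPGroup p G) {K : Subgroup G} [K.Normal] [Finite K]
    (hK : K ≠ ⊥) : K ⊓ Subgroup.center G ≠ ⊥ := by
  obtain ⟨m, hm, hcard⟩ :=
    (hG.to_subgroup K).nontrivial_iff_card.1 ((K.nontrivial_iff_ne_bot).2 hK)
  have hfix1 : (1 : K) ∈ MulAction.fixedPoints (ConjAct G) K := fun g => smul_one g
  obtain ⟨b, hb, hb1⟩ :=
    (hG.of_equiv ConjAct.toConjAct).exists_fixed_point_of_prime_dvd_card_of_fixed_point
      K (hcard ▸ dvd_pow_self p hm.ne') hfix1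
  have hbZ : (b : G) ∈ Subgroup.center G := Subgroup.mem_center_iff.2 fun g => by
    have hg := congrArg Subtype.val (hb (ConjAct.toConjAct g))
    rw [ConjAct.Subgroup.val_conj_smul, ConjAct.toConjAct_smul] at hg
    exact mul_inv_eq_iff_eq_mul.1 hg
  intro h
  have hbK : (b : G) ∈ K ⊓ Subgroup.center G := ⟨b.2, hbZ⟩
  rw [h, Subgroup.mem_bot] at hbK
  exact hb1 (Subtype.ext hbK.symm)

end IsPGroup

namespace IsDiscretePToral

variable {p : ℕ} [Fact p.Prime] {S : Type*} [Group S]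

theorem isPGroup (hS : IsDiscretePToral p S) : IsPGroup p S := by
  obtain ⟨T, hT, ⟨n, hidx⟩, r, ⟨e⟩⟩ := hS
  exact (DiscretePTorus.isPGroup.of_equiv e.symm).of_quotient (IsPGroup.of_card hidx)

theorem exists_finite_normal_le (hS : IsDiscretePToral p S) {P : Subgroup S} [P.Normal]
    (hP : P ≠ ⊥) : ∃ K : Subgroup S, K.Normal ∧ Finite K ∧ K ≠ ⊥ ∧ K ≤ P := by
  have hpS := hS.isPGroup
  obtain ⟨T, hT, ⟨n, hidx⟩, r, ⟨e⟩⟩ := hS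
  have : T.FiniteIndex := ⟨hidx ▸ pow_ne_zero n (Fact.out : p.Prime).ne_zero⟩
  by_cases hPT : Disjoint P T
  · exact ⟨P, ‹_›, Subgroup.finite_of_disjoint hPT, hP, le_rfl⟩
  have : IsMulCommutative T := ⟨⟨fun a b => e.injective (by rw [map_mul, map_mul, mul_comm])⟩⟩
  have : Finite (T.torsionBy p) := T.finite_torsionBy e DiscretePTorus.finite_setOf_pow_eq_one
  obtain ⟨x, ⟨hxP, hxT⟩, hx⟩ := hpS.exists_orderOf_eq_prime_of_ne_bot (disjoint_iff.not.1 hPT)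
  obtain ⟨hxp, hx1⟩ := orderOf_eq_prime_iff.1 hx
  refine ⟨P ⊓ T.torsionBy p, inferInstance,
    Finite.of_injective _ (Subgroup.inclusion_injective inf_le_right), ?_, inf_le_left⟩
  exact fun h => hx1 (Subgroup.mem_bot.1 (h ▸ ⟨hxP, hxT, hxp⟩))

end IsDiscretePToral

/-- If `S` is a discrete `p`-toral group and `P` is a nontrivial
normal subgroup of `S`, then `P ∩ Ω₁(Z(S)) ≠ 1`: there is `x ∈ P` with `x ≠ 1`,
`x ^ p = 1`, and `x` central in `S`. -/
theorem nontrivial_normal_meets_omega1_center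
    (p : ℕ) [Fact p.Prime] {S : Type*} [Group S] (hS : IsDiscretePToral p S)
    (P : Subgroup S) (hPn : P.Normal) (hP : P ≠ ⊥) :
    ∃ x : S, x ∈ P ∧ x ≠ 1 ∧ x ^ p = 1 ∧ x ∈ Subgroup.center S := by
  obtain ⟨K, hKn, hKfin, hK, hKP⟩ := hS.exists_finite_normal_le hP
  have hPZ : P ⊓ Subgroup.center S ≠ ⊥ :=
    ne_bot_of_le_ne_bot (hS.isPGroup.inf_center_ne_bot hK) (inf_le_inf_right _ hKP)
  obtain ⟨x, ⟨hxP, hxZ⟩, hx⟩ := hS.isPGroup.exists_orderOf_eq_prime_of_ne_bot hPZ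
  obtain ⟨hxp, hx1⟩ := orderOf_eq_prime_iff.1 hx
  exact ⟨x, hxP, hx1, hxp, hxZ⟩
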